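/- Mrs. Gerber bound on the residual uncertainty (step (57) in the proof of Proposition 4). Let A be a {0,1}-valued random variable, U a random variable on a finite set, N ~ Bernoulli(ε) with ε ∈ [0,1/2] independent of the pair (A, U), and E = A ⊕ N. Let v ∈ [0,1/2] be such that h₂(v) = H(A | U). Then H(A | U, E) ≤ h₂(v) + h₂(ε) − h₂(v⋆ε). -/

import Mathlib

open scoped BigOperators Classical

noncomputable section

/-- The function `x ↦ -x·log₂ x` used in Shannon entropy (with `0·log 0 = 0`). -/
def nH (x : ℝ) : ℝ := -(x * Real.logb 2 x)

/-- Shannon entropy (in bits) of a pmf on a finite set. -/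
def Hent {S : Type*} [Fintype S] (p : S → ℝ) : ℝ := ∑ s, nH (p s)

/-- Pushforward of a pmf along a map: the distribution of the random variable `f`. -/
def pmap {Ω S : Type*} [Fintype Ω] (p : Ω → ℝ) (f : Ω → S) : S → ℝ :=
  fun s => ∑ ω, if f ω = s then p ω else 0

/-- Entropy (in bits) of the random variable `f` on the finite probability space `(Ω, p)`. -/
def entOf {Ω S : Type*} [Fintype Ω] [Fintype S] (p : Ω → ℝ) (f : Ω → S) : ℝ :=
  Hent (pmap p f)

/-- Conditional Shannon entropy `H(f | g)` (in bits). -/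
def condEnt {Ω S T : Type*} [Fintype Ω] [Fintype S] [Fintype T]
    (p : Ω → ℝ) (f : Ω → S) (g : Ω → T) : ℝ :=
  entOf p (fun ω => (f ω, g ω)) - entOf p g

/-- Mutual information `I(f; g)` (in bits). -/
def MI {Ω S T : Type*} [Fintype Ω] [Fintype S] [Fintype T]
    (p : Ω → ℝ) (f : Ω → S) (g : Ω → T) : ℝ :=
  entOf p f + entOf p g - entOf p (fun ω => (f ω, g ω))

/-- Conditional mutual information `I(f; g | h)` (in bits). -/
def CMI {Ω S T W : Type*} [Fintype Ω] [Fintype S] [Fintype T] [Fintype W]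
    (p : Ω → ℝ) (f : Ω → S) (g : Ω → T) (h : Ω → W) : ℝ :=
  entOf p (fun ω => (f ω, h ω)) + entOf p (fun ω => (g ω, h ω))
    - entOf p (fun ω => (f ω, g ω, h ω)) - entOf p h

/-- `p` is a probability mass function on the finite set `S`. -/
def IsPMF {S : Type*} [Fintype S] (p : S → ℝ) : Prop :=
  (∀ s, 0 ≤ p s) ∧ ∑ s, p s = 1

/-- `W` is a transition probability (stochastic kernel) from `S` to `T`. -/
def IsKernel {S T : Type*} [Fintype S] [Fintype T] (W : S → T → ℝ) : Prop :=
  ∀ s, IsPMF (W s)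

/-- Binary entropy function `h₂` (in bits). -/
def h2 (x : ℝ) : ℝ := nH x + nH (1 - x)

/-- Binary convolution `a ⋆ b = a(1-b) + b(1-a)`. -/
def bstar (a b : ℝ) : ℝ := a * (1 - b) + b * (1 - a)

/-- Bernoulli pmf on `Bool`: `P[true] = p`, `P[false] = 1 - p`. -/
def bern (p : ℝ) : Bool → ℝ := fun b => if b then p else 1 - p

/-! Write `t u = P(U = u)` and `α u = P(A = 1 | U = u)`. Because `N` is independent of `(A, U)`
and `(A, U, N) ↦ (A, U, E)` is a bijection, `H(A | U, E) = H(A | U) + h₂(ε) - H(E | U)`. Given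
`U = u` the bit `E` is Bernoulli(`α u ⋆ ε`), so `H(A | U) = ∑ t u h₂(α u) = h₂(v)` and
`H(E | U) = ∑ t u h₂(α u ⋆ ε)`; the claim is then Mrs. Gerber's lemma
`h₂(v ⋆ ε) ≤ ∑ t u h₂(α u ⋆ ε)`.

Mrs. Gerber's lemma is used in tangent-line form: some `c` satisfies
`h₂(v ⋆ ε) + c (h₂ α - h₂ v) ≤ h₂(α ⋆ ε)` for all `α ∈ [0, 1]`. For `v, ε ∈ (0, 1/2)` take
`c = (1 - 2ε) L(v ⋆ ε) / L(v)` with `L = h₂'`; then `α ↦ h₂(α ⋆ ε) - c h₂(α)` is minimal at `v`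
because `α ↦ L(α ⋆ ε) / L(α)` is nondecreasing on `(0, 1/2)`. The sign of that derivative is the
sign of `g(α ⋆ ε) - (1 - 2ε) g(α)` for `g x = x (1 - x) L x`, which is nonnegative since `g` is
concave on `(0, 1/2]`, vanishes at `1/2`, and `α ⋆ ε = (1 - 2ε) α + 2ε · 1/2`.
-/

open Real Set

lemma h2_eq_binEntropy (x : ℝ) : h2 x = binEntropy x / log 2 := by
  simp only [h2, nH, logb, binEntropy_eq_negMulLog_add_negMulLog_one_sub, negMulLog]
  ring

lemma bstar_one_sub (α ε : ℝ) : bstar (1 - α) ε = 1 - bstar α ε := by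
  unfold bstar; ring

lemma hasDerivAt_bstar (ε α : ℝ) : HasDerivAt (fun x => bstar x ε) (1 - 2 * ε) α := by
  have h : (fun x => bstar x ε) = fun x => (1 - 2 * ε) * x + ε := by
    funext x; unfold bstar; ring
  rw [h]
  simpa using ((hasDerivAt_id α).const_mul (1 - 2 * ε)).add_const ε

lemma bstar_mem_Ioo {ε α : ℝ} (hε : ε ∈ Ico (0 : ℝ) (1 / 2)) (hα : α ∈ Ioo (0 : ℝ) (1 / 2)) :
    bstar α ε ∈ Ioo (0 : ℝ) (1 / 2) := by
  obtain ⟨hε0, hε1⟩ := hε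
  obtain ⟨hα0, hα1⟩ := hα
  unfold bstar
  constructor <;> nlinarith

lemma binEntropy_le_binEntropy_of_mem_Icc {x y : ℝ} (hy : 0 ≤ y) (hx : x ∈ Icc y (1 - y)) :
    binEntropy y ≤ binEntropy x := by
  obtain ⟨hyx, hx1⟩ := hx
  have hmono := binEntropy_strictMonoOn.monotoneOn
  rcases le_total x 2⁻¹ with hx2 | hx2
  · exact hmono ⟨hy, hyx.trans hx2⟩ ⟨hy.trans hyx, hx2⟩ hyx
  · rw [← binEntropy_one_sub x]
    exact hmono ⟨hy, by linarith⟩ ⟨by linarith, by linarith⟩ (by linarith)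

/-- The derivative of `binEntropy`: the log-odds of `1 - x`, not of `x`. -/
def logOdds (x : ℝ) : ℝ := log (1 - x) - log x

lemma logOdds_pos {x : ℝ} (hx : x ∈ Ioo (0 : ℝ) (1 / 2)) : 0 < logOdds x :=
  sub_pos.mpr (log_lt_log hx.1 (by linarith [hx.2]))

lemma logOdds_antitoneOn : AntitoneOn logOdds (Ioo 0 1) := by
  intro x hx y hy hxy
  have := log_le_log hx.1 hxy
  have := log_le_log (by linarith [hy.2]) (by linarith : 1 - y ≤ 1 - x)
  unfold logOdds
  linarith

lemma hasDerivAt_logOdds {x : ℝ} (hx : x ∈ Ioo (0 : ℝ) 1) :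
    HasDerivAt logOdds (-(x * (1 - x))⁻¹) x := by
  have h0 : x ≠ 0 := hx.1.ne'
  have h1 : 1 - x ≠ 0 := by linarith [hx.2]
  have := ((hasDerivAt_log h1).comp x ((hasDerivAt_id x).const_sub 1)).sub (hasDerivAt_log h0)
  exact this.congr_deriv (by field_simp; ring)

lemma hasDerivAt_binEntropy_of_mem_Ioo {x : ℝ} (hx : x ∈ Ioo (0 : ℝ) 1) :
    HasDerivAt binEntropy (logOdds x) x :=
  hasDerivAt_binEntropy hx.1.ne' (by linarith [hx.2])

lemma hasDerivAt_mul_logOdds {x : ℝ} (hx : x ∈ Ioo (0 : ℝ) 1) :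
    HasDerivAt (fun y => y * (1 - y) * logOdds y) ((1 - 2 * x) * logOdds x - 1) x := by
  have h0 : x ≠ 0 := hx.1.ne'
  have h1 : 1 - x ≠ 0 := by linarith [hx.2]
  have := ((hasDerivAt_id x).mul ((hasDerivAt_id x).const_sub 1)).mul (hasDerivAt_logOdds hx)
  exact this.congr_deriv (by simp only [id, Pi.mul_apply]; field_simp; ring)

lemma concaveOn_mul_logOdds : ConcaveOn ℝ (Ioc 0 (1 / 2)) (fun x => x * (1 - x) * logOdds x) := by
  have hsub : ∀ {x : ℝ}, x ∈ Ioo (0 : ℝ) (1 / 2) → x ∈ Ioo (0 : ℝ) 1 :=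
    fun hx => ⟨hx.1, by linarith [hx.2]⟩
  refine AntitoneOn.concaveOn_of_deriv (convex_Ioc _ _)
    (fun x hx =>
      (hasDerivAt_mul_logOdds ⟨hx.1, by linarith [hx.2]⟩).continuousAt.continuousWithinAt)
    (fun x hx => ?_) (fun x hx y hy hxy => ?_) <;> rw [interior_Ioc] at *
  · exact (hasDerivAt_mul_logOdds (hsub hx)).differentiableAt.differentiableWithinAt
  · rw [(hasDerivAt_mul_logOdds (hsub hx)).deriv, (hasDerivAt_mul_logOdds (hsub hy)).deriv]
    have := mul_le_mul (by linarith : 1 - 2 * y ≤ 1 - 2 * x)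
      (logOdds_antitoneOn (hsub hx) (hsub hy) hxy) (logOdds_pos hy).le (by linarith [hx.2])
    linarith

lemma mul_mul_logOdds_le_bstar {ε α : ℝ} (hε : ε ∈ Icc (0 : ℝ) (1 / 2))
    (hα : α ∈ Ioc (0 : ℝ) (1 / 2)) :
    (1 - 2 * ε) * (α * (1 - α) * logOdds α)
      ≤ bstar α ε * (1 - bstar α ε) * logOdds (bstar α ε) := by
  set g : ℝ → ℝ := fun x => x * (1 - x) * logOdds x
  have hs : (1 - 2 * ε) • α + (2 * ε) • (1 / 2 : ℝ) = bstar α ε := by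
    simp only [smul_eq_mul, bstar]; ring
  calc (1 - 2 * ε) * g α = (1 - 2 * ε) • g α + (2 * ε) • g (1 / 2) := by norm_num [g, logOdds]
    _ ≤ g (bstar α ε) := hs ▸ concaveOn_mul_logOdds.2 hα ⟨by norm_num, le_rfl⟩
        (by linarith [hε.2]) (by linarith [hε.1]) (by ring)

lemma monotoneOn_logOdds_bstar_div {ε : ℝ} (hε : ε ∈ Ico (0 : ℝ) (1 / 2)) :
    MonotoneOn (fun α => logOdds (bstar α ε) / logOdds α) (Ioo 0 (1 / 2)) := by
  have hderiv : ∀ α ∈ Ioo (0 : ℝ) (1 / 2), HasDerivAt (fun α => logOdds (bstar α ε) / logOdds α)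
      ((-(bstar α ε * (1 - bstar α ε))⁻¹ * (1 - 2 * ε) * logOdds α
        - logOdds (bstar α ε) * -(α * (1 - α))⁻¹) / logOdds α ^ 2) α := by
    intro α hα
    have hs := bstar_mem_Ioo hε hα
    exact ((hasDerivAt_logOdds ⟨hs.1, by linarith [hs.2]⟩).comp α (hasDerivAt_bstar ε α)).div
      (hasDerivAt_logOdds ⟨hα.1, by linarith [hα.2]⟩) (logOdds_pos hα).ne'
  refine monotoneOn_of_deriv_nonneg (convex_Ioo _ _)
    (fun α hα => (hderiv α hα).continuousAt.continuousWithinAt)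
    (fun α hα => ?_) (fun α hα => ?_) <;> rw [interior_Ioo] at *
  · exact (hderiv α hα).differentiableAt.differentiableWithinAt
  · rw [(hderiv α hα).deriv]
    obtain ⟨hs0, hs1⟩ := bstar_mem_Ioo hε hα
    obtain ⟨hα0, hα1⟩ := hα
    have key := mul_mul_logOdds_le_bstar ⟨hε.1, hε.2.le⟩ ⟨hα0, hα1.le⟩
    have hnum : -(bstar α ε * (1 - bstar α ε))⁻¹ * (1 - 2 * ε) * logOdds α
        - logOdds (bstar α ε) * -(α * (1 - α))⁻¹
        = (bstar α ε * (1 - bstar α ε) * logOdds (bstar α ε)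
            - (1 - 2 * ε) * (α * (1 - α) * logOdds α))
          / (α * (1 - α) * (bstar α ε * (1 - bstar α ε))) := by
      have : 1 - bstar α ε ≠ 0 := by linarith
      have : 1 - α ≠ 0 := by linarith
      field_simp
      ring
    rw [hnum]
    apply div_nonneg (div_nonneg (by linarith) _) (sq_nonneg _)
    exact mul_nonneg (mul_nonneg hα0.le (by linarith)) (mul_nonneg hs0.le (by linarith))

lemma isMinOn_of_hasDerivAt_nonpos_nonneg {f f' : ℝ → ℝ} {a b v : ℝ} (hv : v ∈ Icc a b)
    (hf : ContinuousOn f (Icc a b)) (hderiv : ∀ x ∈ Ioo a b, HasDerivAt f (f' x) x)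
    (hle : ∀ x ∈ Ioo a v, f' x ≤ 0) (hge : ∀ x ∈ Ioo v b, 0 ≤ f' x) :
    IsMinOn f (Icc a b) v := by
  intro x hx
  rcases le_total x v with hxv | hvx
  · refine antitoneOn_of_hasDerivWithinAt_nonpos (f' := f') (convex_Icc a v)
      (hf.mono (Icc_subset_Icc le_rfl hv.2)) (fun y hy => ?_) (fun y hy => ?_)
      ⟨hx.1, hxv⟩ ⟨hv.1, le_rfl⟩ hxv <;> rw [interior_Icc] at *
    · exact (hderiv y ⟨hy.1, hy.2.trans_le hv.2⟩).hasDerivWithinAt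
    · exact hle y hy
  · refine monotoneOn_of_hasDerivWithinAt_nonneg (f' := f') (convex_Icc v b)
      (hf.mono (Icc_subset_Icc hv.1 le_rfl)) (fun y hy => ?_) (fun y hy => ?_)
      ⟨le_rfl, hv.2⟩ ⟨hvx, hx.2⟩ hvx <;> rw [interior_Icc] at *
    · exact (hderiv y ⟨hv.1.trans_lt hy.1, hy.2⟩).hasDerivWithinAt
    · exact hge y hy

lemma binEntropy_bstar_tangent_of_mem_Ioo {ε v α : ℝ} (hε : ε ∈ Ico (0 : ℝ) (1 / 2))
    (hv : v ∈ Ioo (0 : ℝ) (1 / 2)) (hα : α ∈ Icc (0 : ℝ) (1 / 2)) :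
    binEntropy (bstar v ε)
        + (1 - 2 * ε) * (logOdds (bstar v ε) / logOdds v) * (binEntropy α - binEntropy v)
      ≤ binEntropy (bstar α ε) := by
  set r : ℝ → ℝ := fun α => logOdds (bstar α ε) / logOdds α
  set c := (1 - 2 * ε) * r v
  have hmin : IsMinOn (fun y => binEntropy (bstar y ε) - c * binEntropy y) (Icc 0 (1 / 2)) v := by
    refine isMinOn_of_hasDerivAt_nonpos_nonneg
      (f' := fun y => (1 - 2 * ε) * logOdds y * (r y - r v)) ⟨hv.1.le, hv.2.le⟩
      (by unfold bstar; fun_prop) (fun y hy => ?_) (fun y hy => ?_) (fun y hy => ?_)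
    · have hs := bstar_mem_Ioo hε hy
      have := ((hasDerivAt_binEntropy_of_mem_Ioo ⟨hs.1, by linarith [hs.2]⟩).comp y
        (hasDerivAt_bstar ε y)).sub
        ((hasDerivAt_binEntropy_of_mem_Ioo ⟨hy.1, by linarith [hy.2]⟩).const_mul c)
      exact this.congr_deriv (by
        have := (logOdds_pos hy).ne'
        simp only [r, c]; field_simp)
    · have hy' : y ∈ Ioo (0 : ℝ) (1 / 2) := ⟨hy.1, hy.2.trans hv.2⟩
      exact mul_nonpos_of_nonneg_of_nonpos
        (mul_nonneg (by linarith [hε.2]) (logOdds_pos hy').le)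
        (sub_nonpos.mpr (monotoneOn_logOdds_bstar_div hε hy' hv hy.2.le))
    · have hy' : y ∈ Ioo (0 : ℝ) (1 / 2) := ⟨hv.1.trans hy.1, hy.2⟩
      exact mul_nonneg (mul_nonneg (by linarith [hε.2]) (logOdds_pos hy').le)
        (sub_nonneg.mpr (monotoneOn_logOdds_bstar_div hε hv hy' hy.1.le))
  linarith [isMinOn_iff.1 hmin α hα]

theorem exists_binEntropy_bstar_tangent {ε v : ℝ} (hε : ε ∈ Icc (0 : ℝ) (1 / 2))
    (hv : v ∈ Icc (0 : ℝ) (1 / 2)) : ∃ c : ℝ, ∀ α ∈ Icc (0 : ℝ) 1,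
      binEntropy (bstar v ε) + c * (binEntropy α - binEntropy v) ≤ binEntropy (bstar α ε) := by
  suffices ∃ c : ℝ, ∀ α ∈ Icc (0 : ℝ) (1 / 2),
      binEntropy (bstar v ε) + c * (binEntropy α - binEntropy v) ≤ binEntropy (bstar α ε) by
    obtain ⟨c, hc⟩ := this
    refine ⟨c, fun α hα => ?_⟩
    rcases le_total α (1 / 2) with h | h
    · exact hc α ⟨hα.1, h⟩
    · simpa [bstar_one_sub] using hc (1 - α) ⟨by linarith [hα.2], by linarith⟩
  obtain ⟨hε0, hε1⟩ := hε
  obtain ⟨hv0, hv1⟩ := hv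
  -- At `ε = 1/2`, `v = 0` and `v = 1/2` the interior slope degenerates (`logOdds 0 = 0` because
  -- `log 0 = 0`), so `c` is chosen by hand.
  rcases hε1.lt_or_eq with hε1 | rfl
  swap
  · have hhalf : ∀ t, bstar t (1 / 2) = 1 / 2 := fun t => by unfold bstar; ring
    exact ⟨0, fun α _ => by rw [hhalf, hhalf, zero_mul, add_zero]⟩
  rcases hv0.lt_or_eq with hv0 | rfl
  swap
  · refine ⟨0, fun α hα => ?_⟩
    have hzero : bstar 0 ε = ε := by unfold bstar; ring
    rw [hzero, zero_mul, add_zero]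
    exact binEntropy_le_binEntropy_of_mem_Icc hε0
      ⟨by unfold bstar; nlinarith [hα.1], by unfold bstar; nlinarith [hα.2]⟩
  rcases hv1.lt_or_eq with hv1 | rfl
  swap
  · refine ⟨1, fun α hα => ?_⟩
    have : binEntropy α ≤ binEntropy (bstar α ε) :=
      binEntropy_le_binEntropy_of_mem_Icc hα.1 ⟨by unfold bstar; nlinarith [hα.2],
        by unfold bstar; nlinarith [hα.2]⟩
    have hhalf : bstar (1 / 2) ε = 1 / 2 := by unfold bstar; ring
    rw [hhalf]
    linarith
  exact ⟨_, fun α hα => binEntropy_bstar_tangent_of_mem_Ioo ⟨hε0, hε1⟩ ⟨hv0, hv1⟩ hα⟩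

theorem h2_bstar_le_sum_mul {ι : Type*} [Fintype ι] {ε v : ℝ} (hε : ε ∈ Icc (0 : ℝ) (1 / 2))
    (hv : v ∈ Icc (0 : ℝ) (1 / 2)) {t α : ι → ℝ} (ht : ∀ i, 0 ≤ t i) (ht1 : ∑ i, t i = 1)
    (hα : ∀ i, α i ∈ Icc (0 : ℝ) 1) (hmean : ∑ i, t i * h2 (α i) = h2 v) :
    h2 (bstar v ε) ≤ ∑ i, t i * h2 (bstar (α i) ε) := by
  obtain ⟨c, hc⟩ := exists_binEntropy_bstar_tangent hε hv
  have htangent : ∀ i, h2 (bstar v ε) + c * (h2 (α i) - h2 v) ≤ h2 (bstar (α i) ε) := fun i => by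
    simp only [h2_eq_binEntropy]
    have := div_le_div_of_nonneg_right (hc (α i) (hα i)) (log_pos one_lt_two).le
    rwa [add_div, mul_div_assoc, sub_div] at this
  calc h2 (bstar v ε)
      = ∑ i, t i * (h2 (bstar v ε) + c * (h2 (α i) - h2 v)) := by
        simp only [mul_add, mul_sub, Finset.sum_add_distrib, Finset.sum_sub_distrib,
          mul_left_comm (t _) c, ← Finset.mul_sum, ← Finset.sum_mul, hmean, ht1]
        ring
    _ ≤ ∑ i, t i * h2 (bstar (α i) ε) :=
        Finset.sum_le_sum fun i _ => mul_le_mul_of_nonneg_left (htangent i) (ht i)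

lemma nH_mul (x y : ℝ) : nH (x * y) = x * nH y + y * nH x := by
  simp only [nH, logb]
  rcases eq_or_ne x 0 with rfl | hx
  · simp
  rcases eq_or_ne y 0 with rfl | hy
  · simp
  rw [log_mul hx hy]; ring

lemma nH_mul_add_nH_mul_one_sub (t x : ℝ) : nH (t * x) + nH (t * (1 - x)) = t * h2 x + nH t := by
  simp only [nH_mul, h2]; ring

section Pushforward

variable {Ω S T : Type*} [Fintype Ω]

lemma pmap_nonneg {p : Ω → ℝ} (hp : ∀ ω, 0 ≤ p ω) (X : Ω → S) (s : S) : 0 ≤ pmap p X s :=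
  Finset.sum_nonneg fun ω _ => by split_ifs <;> simp [hp ω]

lemma sum_pmap [Fintype S] (p : Ω → ℝ) (X : Ω → S) : ∑ s, pmap p X s = ∑ ω, p ω := by
  unfold pmap
  rw [Finset.sum_comm]
  simp

lemma sum_pmap_prodMk_left [Fintype S] (p : Ω → ℝ) (X : Ω → S) (Y : Ω → T) (t : T) :
    ∑ s, pmap p (fun ω => (X ω, Y ω)) (s, t) = pmap p Y t := by
  unfold pmap
  rw [Finset.sum_comm]
  refine Finset.sum_congr rfl fun ω _ => ?_
  by_cases h : Y ω = t <;> simp [h]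

lemma pmap_comp [Fintype S] (p : Ω → ℝ) (X : Ω → S) (φ : S → T) :
    pmap p (fun ω => φ (X ω)) = pmap (pmap p X) φ := by
  funext t
  unfold pmap
  calc ∑ ω, (if φ (X ω) = t then p ω else 0)
      = ∑ ω, ∑ s, if X ω = s then (if φ s = t then p ω else 0) else 0 := by
        refine Finset.sum_congr rfl fun ω _ => ?_
        rw [Finset.sum_ite_eq]; simp
    _ = ∑ s, if φ s = t then ∑ ω, (if X ω = s then p ω else 0) else 0 := by
        rw [Finset.sum_comm]
        refine Finset.sum_congr rfl fun s _ => ?_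
        by_cases h : φ s = t <;> simp [h]

lemma pmap_apply_of_injective {φ : Ω → S} (hφ : Function.Injective φ) (p : Ω → ℝ) (ω : Ω) :
    pmap p φ (φ ω) = p ω := by
  unfold pmap
  simp [hφ.eq_iff]

lemma pmap_apply_of_notMem_range {φ : Ω → S} (p : Ω → ℝ) {s : S} (hs : s ∉ Set.range φ) :
    pmap p φ s = 0 :=
  Finset.sum_eq_zero fun ω _ => if_neg fun h => hs ⟨ω, h⟩

lemma Hent_pmap_of_injective [Fintype S] {φ : Ω → S} (hφ : Function.Injective φ) (p : Ω → ℝ) :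
    Hent (pmap p φ) = Hent p :=
  (Fintype.sum_of_injective φ hφ _ _
    (fun s hs => by rw [pmap_apply_of_notMem_range p hs, nH, zero_mul, neg_zero])
    (fun ω => by rw [pmap_apply_of_injective hφ])).symm

lemma entOf_comp_of_injective [Fintype S] [Fintype T] {φ : S → T} (hφ : Function.Injective φ)
    (p : Ω → ℝ) (X : Ω → S) : entOf p (fun ω => φ (X ω)) = entOf p X := by
  rw [entOf, pmap_comp, Hent_pmap_of_injective hφ, entOf]

end Pushforward

section Independence

variable {Ω Λ S : Type*} [Fintype Ω] [Fintype Λ]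

lemma pmap_mul_comp_fst (μ : Ω → ℝ) {ν : Λ → ℝ} (hν : ∑ n, ν n = 1) (X : Ω → S) :
    pmap (fun ω : Ω × Λ => μ ω.1 * ν ω.2) (fun ω => X ω.1) = pmap μ X := by
  funext s
  unfold pmap
  rw [Fintype.sum_prod_type]
  refine Finset.sum_congr rfl fun w _ => ?_
  split_ifs <;> simp [← Finset.mul_sum, hν]

lemma pmap_mul_prodMk (μ : Ω → ℝ) (ν : Λ → ℝ) (X : Ω → S) (s : S) (n : Λ) :
    pmap (fun ω : Ω × Λ => μ ω.1 * ν ω.2) (fun ω => (X ω.1, ω.2)) (s, n) = pmap μ X s * ν n := by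
  unfold pmap
  rw [Fintype.sum_prod_type, Finset.sum_mul]
  refine Finset.sum_congr rfl fun w _ => ?_
  by_cases h : X w = s <;> simp [h]

lemma Hent_mul [Fintype S] {p : S → ℝ} {q : Λ → ℝ} (hp : ∑ s, p s = 1) (hq : ∑ n, q n = 1) :
    Hent (fun x : S × Λ => p x.1 * q x.2) = Hent p + Hent q := by
  simp only [Hent, Fintype.sum_prod_type, nH_mul, Finset.sum_add_distrib, ← Finset.mul_sum,
    ← Finset.sum_mul, hp, hq]
  ring

lemma entOf_mul_prodMk [Fintype S] {μ : Ω → ℝ} {ν : Λ → ℝ} (hμ : ∑ w, μ w = 1) (hν : ∑ n, ν n = 1)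
    (X : Ω → S) :
    entOf (fun ω : Ω × Λ => μ ω.1 * ν ω.2) (fun ω => (X ω.1, ω.2)) = entOf μ X + Hent ν := by
  rw [entOf, show pmap _ _ = _ from funext fun x => pmap_mul_prodMk μ ν X x.1 x.2, Hent_mul
    ((sum_pmap μ X).trans hμ) hν, entOf]

end Independence

@[simp] lemma bern_true (ε : ℝ) : bern ε true = ε := rfl

@[simp] lemma bern_false (ε : ℝ) : bern ε false = 1 - ε := rfl

lemma bern_nonneg {ε : ℝ} (h0 : 0 ≤ ε) (h1 : ε ≤ 1) (b : Bool) : 0 ≤ bern ε b := by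
  cases b <;> simp [h0, h1]

lemma sum_bern (ε : ℝ) : ∑ b, bern ε b = 1 := by simp

lemma Hent_bern (ε : ℝ) : Hent (bern ε) = h2 ε := by simp [Hent, h2]

section Binary

variable {Ω T : Type*} [Fintype Ω]

lemma pmap_prodMk_false (p : Ω → ℝ) (X : Ω → Bool) (Y : Ω → T) (t : T) :
    pmap p (fun ω => (X ω, Y ω)) (false, t)
      = pmap p Y t - pmap p (fun ω => (X ω, Y ω)) (true, t) := by
  have := sum_pmap_prodMk_left p X Y t
  rw [Fintype.sum_bool] at this
  linarith

theorem condEnt_eq_sum_mul_h2 [Fintype T] (p : Ω → ℝ) (X : Ω → Bool) (Y : Ω → T) {γ : T → ℝ}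
    (hγ : ∀ t, pmap p (fun ω => (X ω, Y ω)) (true, t) = pmap p Y t * γ t) :
    condEnt p X Y = ∑ t, pmap p Y t * h2 (γ t) := by
  have hfalse : ∀ t, pmap p (fun ω => (X ω, Y ω)) (false, t) = pmap p Y t * (1 - γ t) :=
    fun t => by rw [pmap_prodMk_false, hγ]; ring
  simp only [condEnt, entOf, Hent, Fintype.sum_prod_type, Fintype.sum_bool, hγ, hfalse,
    ← Finset.sum_add_distrib, nH_mul_add_nH_mul_one_sub]
  rw [Finset.sum_add_distrib, add_sub_cancel_right]

lemma exists_pmap_true_eq_mul {p : Ω → ℝ} (hp : ∀ ω, 0 ≤ p ω) (X : Ω → Bool) (Y : Ω → T)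
    (t : T) : ∃ α ∈ Icc (0 : ℝ) 1, pmap p (fun ω => (X ω, Y ω)) (true, t) = pmap p Y t * α := by
  have h0 := pmap_nonneg hp (fun ω => (X ω, Y ω)) (true, t)
  have h1 := pmap_nonneg hp (fun ω => (X ω, Y ω)) (false, t)
  rw [pmap_prodMk_false] at h1
  rcases (pmap_nonneg hp Y t).eq_or_lt with hY | hY
  · exact ⟨0, ⟨le_rfl, zero_le_one⟩, by rw [← hY]; linarith⟩
  · exact ⟨_, ⟨div_nonneg h0 hY.le, (div_le_one hY).2 (by linarith)⟩, by field_simp⟩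

variable {μ : Ω → ℝ} {ν : Bool → ℝ}

lemma pmap_xor_prodMk_true (hν : ∑ n, ν n = 1) (A : Ω → Bool) (U : Ω → T) (t : T) :
    pmap (fun ω : Ω × Bool => μ ω.1 * ν ω.2) (fun ω => (xor (A ω.1) ω.2, U ω.1)) (true, t)
      = pmap (fun ω : Ω × Bool => μ ω.1 * ν ω.2) (fun ω => (A ω.1, U ω.1)) (true, t) * ν false
        + pmap (fun ω : Ω × Bool => μ ω.1 * ν ω.2) (fun ω => (A ω.1, U ω.1)) (false, t)
          * ν true := by
  simp only [pmap_mul_comp_fst μ hν (fun w => (A w, U w))]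
  unfold pmap
  rw [Fintype.sum_prod_type, Finset.sum_mul, Finset.sum_mul, ← Finset.sum_add_distrib]
  refine Finset.sum_congr rfl fun w _ => ?_
  rw [Fintype.sum_bool]
  by_cases hU : U w = t <;> cases hA : A w <;> simp [hU, hA]

theorem condEnt_xor_noise [Fintype T] (hμ : ∑ w, μ w = 1) (hν : ∑ n, ν n = 1)
    (A : Ω → Bool) (U : Ω → T) :
    condEnt (fun ω : Ω × Bool => μ ω.1 * ν ω.2) (fun ω => A ω.1)
        (fun ω => (U ω.1, xor (A ω.1) ω.2))
      = condEnt (fun ω : Ω × Bool => μ ω.1 * ν ω.2) (fun ω => A ω.1) (fun ω => U ω.1) + Hent ν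
        - condEnt (fun ω : Ω × Bool => μ ω.1 * ν ω.2) (fun ω => xor (A ω.1) ω.2)
            (fun ω => U ω.1) := by
  set p : Ω × Bool → ℝ := fun ω => μ ω.1 * ν ω.2
  have hinj : Function.Injective fun x : (Bool × T) × Bool => (x.1.1, (x.1.2, xor x.1.1 x.2)) := by
    rintro ⟨⟨a, t⟩, n⟩ ⟨⟨a', t'⟩, n'⟩ h
    simp only [Prod.mk.injEq] at h
    obtain ⟨rfl, rfl, h⟩ := h
    simp_all
  have hjoint : entOf p (fun ω => (A ω.1, (U ω.1, xor (A ω.1) ω.2)))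
      = entOf p (fun ω => (A ω.1, U ω.1)) + Hent ν :=
    calc _ = entOf p (fun ω => ((A ω.1, U ω.1), ω.2)) :=
          entOf_comp_of_injective hinj p (fun ω => ((A ω.1, U ω.1), ω.2))
      _ = entOf μ (fun w => (A w, U w)) + Hent ν := entOf_mul_prodMk hμ hν (fun w => (A w, U w))
      _ = _ := by rw [entOf, entOf, pmap_mul_comp_fst μ hν (fun w => (A w, U w))]
  have hswap : entOf p (fun ω => (U ω.1, xor (A ω.1) ω.2))
      = entOf p (fun ω => (xor (A ω.1) ω.2, U ω.1)) :=
    (entOf_comp_of_injective Prod.swap_injective p _).symm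
  simp only [condEnt]
  linarith

end Binary

/-- **Mrs. Gerber bound on the residual uncertainty** (step (57) in the proof of
Proposition 4). Let `(A, U) = (f(ω), g(ω))` be random variables on `(𝒲, μ)` with `A`
binary, and let `N ∼ Bernoulli(ε)`, `ε ∈ [0, 1/2]`, be independent of `(A, U)` (the joint
space is `𝒲 × Bool` with product pmf); set `E = A ⊕ N`. If `v ∈ [0, 1/2]` satisfies
`h₂(v) = H(A | U)`, then `H(A | U, E) ≤ h₂(v) + h₂(ε) − h₂(v ⋆ ε)`. -/
theorem mrs_gerber_residual {W U : Type*} [Fintype W] [Fintype U]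
    (ε v : ℝ) (hε : ε ∈ Set.Icc (0 : ℝ) (1 / 2)) (hv : v ∈ Set.Icc (0 : ℝ) (1 / 2))
    (μ : W → ℝ) (hμ : IsPMF μ) (f : W → Bool) (g : W → U)
    (hAU : h2 v = condEnt (fun ω : W × Bool => μ ω.1 * bern ε ω.2)
        (fun ω => f ω.1) (fun ω => g ω.1)) :
    condEnt (fun ω : W × Bool => μ ω.1 * bern ε ω.2)
        (fun ω => f ω.1) (fun ω => (g ω.1, xor (f ω.1) ω.2))
      ≤ h2 v + h2 ε - h2 (bstar v ε) := by
  obtain ⟨hμ0, hμ1⟩ := hμ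
  set p : W × Bool → ℝ := fun ω => μ ω.1 * bern ε ω.2
  have hp0 : ∀ ω, 0 ≤ p ω := fun ω =>
    mul_nonneg (hμ0 _) (bern_nonneg hε.1 (by linarith [hε.2]) _)
  have hp1 : ∑ u, pmap p (fun ω => g ω.1) u = 1 := by
    simp only [sum_pmap, p, Fintype.sum_prod_type, ← Finset.mul_sum, sum_bern, mul_one, hμ1]
  choose α hα hA using exists_pmap_true_eq_mul hp0 (fun ω => f ω.1) (fun ω => g ω.1)
  have hE : ∀ u, pmap p (fun ω => (xor (f ω.1) ω.2, g ω.1)) (true, u)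
      = pmap p (fun ω => g ω.1) u * bstar (α u) ε := fun u => by
    rw [pmap_xor_prodMk_true (sum_bern ε), pmap_prodMk_false, hA]
    simp only [p, bern_true, bern_false, bstar]
    ring
  rw [condEnt_eq_sum_mul_h2 p _ _ hA] at hAU
  rw [condEnt_xor_noise hμ1 (sum_bern ε), Hent_bern, condEnt_eq_sum_mul_h2 p _ _ hA,
    condEnt_eq_sum_mul_h2 p _ _ hE, ← hAU]
  have := h2_bstar_le_sum_mul hε hv (fun u => pmap_nonneg hp0 _ u) hp1 hα hAU.symm
  linarith
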